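/- arXiv:1810.11882 — 2 statements merged into one kernel-verified Lean document; each statement's English description precedes it below -/
import Mathlib

section
/- The Lebesgue volume of the region {(d_1,d_2,d_3) ∈ [0,2]^3 : d_1 > d_2, d_1 > d_3, d_1 < d_2 + d_3, d_1^2 > d_2^2 + d_3^2} equals 2(π−2)/3. -/
/-!
Fix the largest side `d₁ = r ∈ (0, 2]`. The remaining conditions say exactly that `(d₂, d₃)`
lies in the circular segment cut from the disc of radius `r` by the chord `d₂ + d₃ = r`: the
bounds `0 ≤ dᵢ < r ≤ 2` are then automatic. That segment is a quarter disc minus a right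
triangle, of area `(π / 4 - 1 / 2) r²`, and `∫₀² (π - 2) / 4 · r² dr = 2 (π - 2) / 3`.
-/

open MeasureTheory Real Set

theorem integral_sqrt_one_sub_sq_zero_one : ∫ x in (0:ℝ)..1, √(1 - x ^ 2) = π / 4 := by
  have hcont : Continuous fun x : ℝ => √(1 - x ^ 2) := by fun_prop
  have heven : ∫ x in (-1:ℝ)..0, √(1 - x ^ 2) = ∫ x in (0:ℝ)..1, √(1 - x ^ 2) := by
    have := intervalIntegral.integral_comp_neg (a := 0) (b := 1) fun x => √(1 - x ^ 2)
    simp only [neg_sq, neg_zero] at this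
    exact this.symm
  have hsplit := intervalIntegral.integral_add_adjacent_intervals
    (hcont.intervalIntegrable (μ := volume) (-1) 0) (hcont.intervalIntegrable 0 1)
  rw [heven, integral_sqrt_one_sub_sq] at hsplit
  linarith

theorem integral_sqrt_sq_sub_sq {r : ℝ} (hr : 0 ≤ r) :
    ∫ x in (0:ℝ)..r, √(r ^ 2 - x ^ 2) = π * r ^ 2 / 4 := by
  have hscale : ∀ t : ℝ, √(r ^ 2 - (r * t) ^ 2) = r * √(1 - t ^ 2) := fun t => by
    rw [show r ^ 2 - (r * t) ^ 2 = r ^ 2 * (1 - t ^ 2) by ring, sqrt_mul (sq_nonneg r),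
      sqrt_sq hr]
  have := intervalIntegral.smul_integral_comp_mul_left (a := 0) (b := 1)
    (fun x => √(r ^ 2 - x ^ 2)) r
  simp only [mul_zero, mul_one, smul_eq_mul, hscale, intervalIntegral.integral_const_mul,
    integral_sqrt_one_sub_sq_zero_one] at this
  rw [← this]
  ring

def circularSegment (r : ℝ) : Set (ℝ × ℝ) :=
  {q | r < q.1 + q.2 ∧ q.1 ^ 2 + q.2 ^ 2 < r ^ 2}

section circularSegment

variable {r : ℝ} {q : ℝ × ℝ}

theorem fst_mem_Ioo_of_mem_circularSegment (hr : 0 ≤ r) (hq : q ∈ circularSegment r) :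
    q.1 ∈ Ioo 0 r := by
  obtain ⟨hchord, hdisc⟩ := hq
  exact ⟨by nlinarith, by nlinarith⟩

theorem snd_mem_Ioo_of_mem_circularSegment (hr : 0 ≤ r) (hq : q ∈ circularSegment r) :
    q.2 ∈ Ioo 0 r := by
  obtain ⟨hchord, hdisc⟩ := hq
  exact ⟨by nlinarith, by nlinarith⟩

theorem circularSegment_eq_regionBetween (hr : 0 ≤ r) :
    circularSegment r =
      regionBetween (fun x => r - x) (fun x => √(r ^ 2 - x ^ 2)) (Ioo 0 r) := by
  ext q
  constructor
  · intro hq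
    exact ⟨fst_mem_Ioo_of_mem_circularSegment hr hq, by linarith [hq.1],
      lt_sqrt_of_sq_lt (by linarith [hq.2])⟩
  · rintro ⟨hx, hchord, harc⟩
    rw [lt_sqrt (by linarith [hx.2])] at harc
    exact ⟨by linarith, by linarith⟩

theorem volume_circularSegment (hr : 0 ≤ r) :
    volume (circularSegment r) = ENNReal.ofReal ((π - 2) / 4 * r ^ 2) := by
  have hchord : Continuous fun x : ℝ => r - x := by fun_prop
  have harc : Continuous fun x : ℝ => √(r ^ 2 - x ^ 2) := by fun_prop
  have hchord_le_arc : ∀ x ∈ Ioo 0 r, r - x ≤ √(r ^ 2 - x ^ 2) := fun x ⟨hx, hxr⟩ =>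
    (le_sqrt (by linarith) (by nlinarith)).2 (by nlinarith)
  rw [circularSegment_eq_regionBetween hr, Measure.volume_eq_prod,
    volume_regionBetween_eq_integral (hchord.integrableOn_Icc.mono_set Ioo_subset_Icc_self)
      (harc.integrableOn_Icc.mono_set Ioo_subset_Icc_self) measurableSet_Ioo hchord_le_arc,
    ← integral_Ioc_eq_integral_Ioo, ← intervalIntegral.integral_of_le hr]
  simp only [Pi.sub_apply]
  rw [intervalIntegral.integral_sub (harc.intervalIntegrable 0 r)
      (hchord.intervalIntegrable 0 r),
    integral_sqrt_sq_sub_sq hr, intervalIntegral.integral_sub intervalIntegrable_const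
      intervalIntegral.intervalIntegrable_id, intervalIntegral.integral_const, integral_id,
    smul_eq_mul]
  congr 1
  ring

theorem measurableSet_setOf_mem_circularSegment {A : Set ℝ} (hA : MeasurableSet A) :
    MeasurableSet {p : ℝ × ℝ × ℝ | p.1 ∈ A ∧ p.2 ∈ circularSegment p.1} := by
  simp only [circularSegment, mem_ofPred_eq]
  exact measurableSet_setOfPred.2 (by fun_prop (disch := exact hA))

end circularSegment

theorem MeasureTheory.Measure.prod_apply_setOf_fst_mem_and {α β : Type*} [MeasurableSpace α]
    [MeasurableSpace β] (μ : Measure α) (ν : Measure β) [SFinite ν] {A : Set α}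
    {T : α → Set β} (hA : MeasurableSet A)
    (hS : MeasurableSet {p : α × β | p.1 ∈ A ∧ p.2 ∈ T p.1}) :
    μ.prod ν {p | p.1 ∈ A ∧ p.2 ∈ T p.1} = ∫⁻ a in A, ν (T a) ∂μ := by
  rw [Measure.prod_apply hS, ← lintegral_indicator hA]
  congr 1
  funext a
  by_cases ha : a ∈ A <;> simp [ha]

theorem stmt_2 :
    volume {p : ℝ × ℝ × ℝ |
      p.1 ∈ Set.Icc (0:ℝ) 2 ∧ p.2.1 ∈ Set.Icc (0:ℝ) 2 ∧ p.2.2 ∈ Set.Icc (0:ℝ) 2 ∧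
      p.2.1 < p.1 ∧ p.2.2 < p.1 ∧ p.1 < p.2.1 + p.2.2 ∧
      p.2.1 ^ 2 + p.2.2 ^ 2 < p.1 ^ 2} = ENNReal.ofReal (2 * (π - 2) / 3) := by
  have hπ : 0 ≤ (π - 2) / 4 := by linarith [pi_gt_three]
  have hquadratic : Continuous fun r : ℝ => (π - 2) / 4 * r ^ 2 := by fun_prop
  calc volume _
      = volume {p : ℝ × ℝ × ℝ | p.1 ∈ Ioc 0 2 ∧ p.2 ∈ circularSegment p.1} := by
        congr 1
        ext ⟨r, x, y⟩
        constructor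
        · rintro ⟨⟨-, hr⟩, ⟨hx, -⟩, -, hxr, -, hchord, hdisc⟩
          exact ⟨⟨by linarith, hr⟩, hchord, hdisc⟩
        · rintro ⟨⟨hr, hr2⟩, hq⟩
          obtain ⟨hx, hxr⟩ := fst_mem_Ioo_of_mem_circularSegment hr.le hq
          obtain ⟨hy, hyr⟩ := snd_mem_Ioo_of_mem_circularSegment hr.le hq
          exact ⟨⟨hr.le, hr2⟩, ⟨hx.le, by linarith⟩, ⟨hy.le, by linarith⟩, hxr, hyr,
            hq⟩
    _ = ∫⁻ r in Ioc 0 2, ENNReal.ofReal ((π - 2) / 4 * r ^ 2) := by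
        rw [Measure.volume_eq_prod,
          Measure.prod_apply_setOf_fst_mem_and _ _ measurableSet_Ioc
            (measurableSet_setOf_mem_circularSegment measurableSet_Ioc)]
        exact setLIntegral_congr_fun measurableSet_Ioc fun r hr => volume_circularSegment hr.1.le
    _ = ENNReal.ofReal (∫ r in (0:ℝ)..2, (π - 2) / 4 * r ^ 2) := by
        rw [intervalIntegral.integral_of_le zero_le_two, ofReal_integral_eq_lintegral_ofReal
          (hquadratic.integrableOn_Icc.mono_set Ioc_subset_Icc_self)
          (ae_of_all _ fun r => mul_nonneg hπ (sq_nonneg r))]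
    _ = ENNReal.ofReal (2 * (π - 2) / 3) := by
        rw [intervalIntegral.integral_const_mul, integral_pow]
        congr 1
        norm_num
        ring
end

section
/- In the action-angle parametrization of the equilateral hexagon by the T_135 triangulation, the distance from v_1 to v_3 is d_1, the distance from v_3 to v_5 is d_2, and the distance from v_5 to v_1 is d_3, whenever (d_1,d_2,d_3) lies in the interior of the moment polytope. -/
open Real

noncomputable def heronD (d₁ d₂ d₃ : ℝ) : ℝ :=
  Real.sqrt (2 * d₁ ^ 2 * d₂ ^ 2 + 2 * d₁ ^ 2 * d₃ ^ 2 + 2 * d₂ ^ 2 * d₃ ^ 2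
    - d₁ ^ 4 - d₂ ^ 4 - d₃ ^ 4)

noncomputable def elen (p q : ℝ × ℝ × ℝ) : ℝ :=
  Real.sqrt ((p.1 - q.1) ^ 2 + (p.2.1 - q.2.1) ^ 2 + (p.2.2 - q.2.2) ^ 2)

/-!
The point `v₅` is the apex of the triangle on the base `v₁v₃` of length `d₁`: its abscissa
`(d₁² - d₂² + d₃²) / (2d₁)` is the foot of the altitude, and `heronD d₁ d₂ d₃ = 4 · area` makes its
ordinate the altitude `2 · area / d₁`. Pythagoras in the two right triangles cut off by the
altitude gives the side lengths `d₃` and `d₂`; the triangle inequalities are exactly what makes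
Heron's radicand nonnegative, so that the square root in `heronD` is not truncated.
-/

section Heron

variable {a b c : ℝ}

lemma heron_radicand_eq_mul (a b c : ℝ) :
    2 * a ^ 2 * b ^ 2 + 2 * a ^ 2 * c ^ 2 + 2 * b ^ 2 * c ^ 2 - a ^ 4 - b ^ 4 - c ^ 4
      = (a + b + c) * (-a + b + c) * (a - b + c) * (a + b - c) := by
  ring

lemma heron_radicand_nonneg (hbc : a ≤ b + c) (hac : b ≤ a + c) (hab : c ≤ a + b) :
    0 ≤ 2 * a ^ 2 * b ^ 2 + 2 * a ^ 2 * c ^ 2 + 2 * b ^ 2 * c ^ 2 - a ^ 4 - b ^ 4 - c ^ 4 := by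
  rw [heron_radicand_eq_mul]
  have : 0 ≤ a + b + c := by linarith
  have : 0 ≤ -a + b + c := by linarith
  have : 0 ≤ a - b + c := by linarith
  have : 0 ≤ a + b - c := by linarith
  positivity

lemma heronD_sq (hbc : a ≤ b + c) (hac : b ≤ a + c) (hab : c ≤ a + b) :
    heronD a b c ^ 2
      = 2 * a ^ 2 * b ^ 2 + 2 * a ^ 2 * c ^ 2 + 2 * b ^ 2 * c ^ 2 - a ^ 4 - b ^ 4 - c ^ 4 :=
  Real.sq_sqrt (heron_radicand_nonneg hbc hac hab)

variable {h : ℝ}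

lemma apex_sq_dist_left (ha : a ≠ 0)
    (hh : h ^ 2 = 2 * a ^ 2 * b ^ 2 + 2 * a ^ 2 * c ^ 2 + 2 * b ^ 2 * c ^ 2 - a ^ 4 - b ^ 4 - c ^ 4) :
    ((a ^ 2 - b ^ 2 + c ^ 2) / (2 * a)) ^ 2 + (h / (2 * a)) ^ 2 = c ^ 2 := by
  field_simp
  linear_combination hh

lemma apex_sq_dist_right (ha : a ≠ 0)
    (hh : h ^ 2 = 2 * a ^ 2 * b ^ 2 + 2 * a ^ 2 * c ^ 2 + 2 * b ^ 2 * c ^ 2 - a ^ 4 - b ^ 4 - c ^ 4) :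
    (a - (a ^ 2 - b ^ 2 + c ^ 2) / (2 * a)) ^ 2 + (h / (2 * a)) ^ 2 = b ^ 2 := by
  field_simp
  linear_combination hh

end Heron

lemma elen_eq_of_sq {p q : ℝ × ℝ × ℝ} {r : ℝ} (hr : 0 ≤ r)
    (h : (p.1 - q.1) ^ 2 + (p.2.1 - q.2.1) ^ 2 + (p.2.2 - q.2.2) ^ 2 = r ^ 2) :
    elen p q = r := by
  rw [elen, h, Real.sqrt_sq hr]

theorem stmt_10_general (d₁ d₂ d₃ : ℝ)
    (h₁ : 0 < d₁) (h₂ : 0 < d₂) (h₃ : 0 < d₃)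
    (ht₁ : d₁ < d₂ + d₃) (ht₂ : d₂ < d₁ + d₃) (ht₃ : d₃ < d₁ + d₂) :
    let v₁ : ℝ × ℝ × ℝ := (0, 0, 0)
    let v₃ : ℝ × ℝ × ℝ := (d₁, 0, 0)
    let v₅ : ℝ × ℝ × ℝ :=
      ((d₁ ^ 2 - d₂ ^ 2 + d₃ ^ 2) / (2 * d₁), heronD d₁ d₂ d₃ / (2 * d₁), 0)
    elen v₁ v₃ = d₁ ∧ elen v₃ v₅ = d₂ ∧ elen v₅ v₁ = d₃ := by
  intro v₁ v₃ v₅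
  have hH := heronD_sq ht₁.le ht₂.le ht₃.le
  refine ⟨elen_eq_of_sq h₁.le ?_, elen_eq_of_sq h₂.le ?_, elen_eq_of_sq h₃.le ?_⟩
  · simp only [v₁, v₃]
    ring
  · simpa only [v₃, v₅, sub_zero, zero_sub, neg_sq, zero_pow two_ne_zero, add_zero]
      using apex_sq_dist_right h₁.ne' hH
  · simpa only [v₁, v₅, sub_zero, zero_pow two_ne_zero, add_zero]
      using apex_sq_dist_left h₁.ne' hH

theorem stmt_10 (d₁ d₂ d₃ : ℝ)
    (h₁ : 0 < d₁) (h₁' : d₁ < 2) (h₂ : 0 < d₂) (h₂' : d₂ < 2) (h₃ : 0 < d₃) (h₃' : d₃ < 2)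
    (ht₁ : d₁ < d₂ + d₃) (ht₂ : d₂ < d₁ + d₃) (ht₃ : d₃ < d₁ + d₂) :
    let v₁ : ℝ × ℝ × ℝ := (0, 0, 0)
    let v₃ : ℝ × ℝ × ℝ := (d₁, 0, 0)
    let v₅ : ℝ × ℝ × ℝ :=
      ((d₁ ^ 2 - d₂ ^ 2 + d₃ ^ 2) / (2 * d₁), heronD d₁ d₂ d₃ / (2 * d₁), 0)
    elen v₁ v₃ = d₁ ∧ elen v₃ v₅ = d₂ ∧ elen v₅ v₁ = d₃ :=
  stmt_10_general d₁ d₂ d₃ h₁ h₂ h₃ ht₁ ht₂ ht₃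
end
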